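/- arXiv:1802.04077 — 5 statements merged into one kernel-verified Lean document; each statement's English description precedes it below -/
import Mathlib

section
/- Let α be a real number with α ∉ ℤ. Then the matrix product of the fractional difference matrix Δ^(α) with Δ^(−α) is the identity matrix; that is, for all natural numbers n and k with k ≤ n, the finite sum ∑_{j=k}^{n} Δ^(α)_{nj} · Δ^(−α)_{jk} equals 1 if n = k and equals 0 if k < n. -/
open Filter Finset Topology

/-- The fractional difference matrix `Δ^(α)`:
`Δ^(α)_{nk} = (−1)^{n−k} Γ(α+1)/((n−k)!·Γ(α−n+k+1))` for `k ≤ n`, and `0` for `k > n`. -/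
noncomputable def fracDelta (α : ℝ) (n k : ℕ) : ℝ :=
  if k ≤ n then
    (-1 : ℝ) ^ (n - k) * Real.Gamma (α + 1) /
      ((Nat.factorial (n - k) : ℝ) * Real.Gamma (α - n + k + 1))
  else 0

private lemma smeval_desc_eq_eval (r : ℝ) (n : ℕ) :
    (descPochhammer ℤ n).smeval r = (descPochhammer ℝ n).eval r := by
  induction n with
  | zero => simp [Polynomial.smeval_one]
  | succ n ih =>
    rw [descPochhammer_succ_right, Polynomial.smeval_mul, ih, descPochhammer_succ_eval]
    congr 1
    simp [Polynomial.smeval_sub, Polynomial.smeval_natCast]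

private lemma choose_eq_desc (r : ℝ) (n : ℕ) :
    Ring.choose r n = (descPochhammer ℝ n).eval r / n.factorial := by
  have h := Ring.descPochhammer_eq_factorial_smul_choose r n
  rw [smeval_desc_eq_eval] at h
  rw [h, nsmul_eq_mul]
  field_simp

private lemma gamma_desc (α : ℝ) (hα : ∀ m : ℤ, α ≠ (m : ℝ)) (m : ℕ) :
    Real.Gamma (α + 1) = (descPochhammer ℝ m).eval α * Real.Gamma (α - m + 1) := by
  induction m with
  | zero => simp
  | succ m ih =>
    have hne : (α - (m : ℝ)) ≠ 0 := by
      intro h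
      exact hα m (by push_cast at h ⊢; linarith)
    have e3 : (α - ((m + 1 : ℕ) : ℝ)) + 1 = α - m := by push_cast; ring
    rw [descPochhammer_succ_eval, e3, ih, Real.Gamma_add_one hne]
    ring

private lemma gamma_ne_zero (α : ℝ) (hα : ∀ m : ℤ, α ≠ (m : ℝ)) (m : ℕ) :
    Real.Gamma (α - m + 1) ≠ 0 := by
  refine Real.Gamma_ne_zero fun j h => ?_
  exact hα (m - 1 - j) (by push_cast; linarith)

private lemma fracDelta_eq_choose (α : ℝ) (hα : ∀ m : ℤ, α ≠ (m : ℝ)) (n k : ℕ) (hkn : k ≤ n) :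
    fracDelta α n k = (-1 : ℝ) ^ (n - k) * Ring.choose α (n - k) := by
  have hcast : (α - n + k : ℝ) = α - (n - k : ℕ) := by
    push_cast [hkn]; ring
  rw [fracDelta, if_pos hkn, hcast, choose_eq_desc,
    gamma_desc α hα (n - k)]
  have h1 : Real.Gamma (α - (n - k : ℕ) + 1) ≠ 0 := gamma_ne_zero α hα (n - k)
  rw [mul_div_assoc, mul_comm ((n - k).factorial : ℝ) _,
    mul_comm (Polynomial.eval α (descPochhammer ℝ (n - k))) (Real.Gamma (α - ((n - k : ℕ) : ℝ) + 1)),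
    mul_div_mul_left _ _ h1]

private lemma neg_not_int (α : ℝ) (hα : ∀ m : ℤ, α ≠ (m : ℝ)) : ∀ m : ℤ, -α ≠ (m : ℝ) := by
  intro m h
  exact hα (-m) (by push_cast; linarith)

/-- `Δ^(α) · Δ^(−α) = I`. -/
theorem fracDelta_mul_fracDelta_neg (α : ℝ) (hα : ∀ m : ℤ, α ≠ (m : ℝ)) :
    ∀ n k : ℕ, k ≤ n →
      ∑ j ∈ Finset.Icc k n, fracDelta α n j * fracDelta (-α) j k =
        if n = k then 1 else 0 := by
  intro n k hkn
  have hS : ∑ j ∈ Finset.Icc k n, fracDelta α n j * fracDelta (-α) j k =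
      (-1 : ℝ) ^ (n - k) *
        ∑ ij ∈ Finset.HasAntidiagonal.antidiagonal (n - k), Ring.choose α ij.1 * Ring.choose (-α) ij.2 := by
    rw [Finset.mul_sum]
    refine Finset.sum_nbij' (fun j => (n - j, j - k)) (fun ij => n - ij.1) ?_ ?_ ?_ ?_ ?_
    · intro j hj
      simp only [Finset.mem_Icc] at hj
      simp only [Finset.HasAntidiagonal.mem_antidiagonal]
      omega
    · intro ij hij
      simp only [Finset.HasAntidiagonal.mem_antidiagonal] at hij
      simp only [Finset.mem_Icc]
      omega
    · intro j hj
      simp only [Finset.mem_Icc] at hj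
      dsimp only
      omega
    · intro ij hij
      simp only [Finset.HasAntidiagonal.mem_antidiagonal] at hij
      have : ij.2 = n - k - ij.1 := by omega
      have h1 : ij.1 ≤ n := by omega
      ext <;> simp <;> omega
    · intro j hj
      simp only [Finset.mem_Icc] at hj
      rw [fracDelta_eq_choose α hα n j hj.2,
        fracDelta_eq_choose (-α) (neg_not_int α hα) j k hj.1]
      have hpow : ((-1 : ℝ) ^ (n - j)) * ((-1 : ℝ) ^ (j - k)) = (-1 : ℝ) ^ (n - k) := by
        rw [← pow_add]
        congr 1
        omega
      ring_nf
      rw [← hpow]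
      ring
  rw [hS, ← Ring.add_choose_eq (n - k) (Commute.all α (-α)), add_neg_cancel]
  have h0 : Ring.choose (0 : ℝ) (n - k) = ((Nat.choose 0 (n - k) : ℕ) : ℝ) := by
    rw [← Nat.cast_zero, Ring.choose_natCast]
  rw [h0]
  rcases eq_or_lt_of_le hkn with h | h
  · simp [h.symm, Nat.sub_self]
  · have hne : n ≠ k := by omega
    have : n - k ≠ 0 := by omega
    rw [if_neg hne]
    rcases Nat.exists_eq_succ_of_ne_zero this with ⟨m, hm⟩
    simp [hm]
end

section
/- Let α and β be real numbers with α ∉ ℤ, β ∉ ℤ and α + β ∉ ℤ. Then the matrix product of the fractional difference matrices satisfies Δ^(α) Δ^(β) = Δ^(α+β); that is, for all natural numbers n and k with k ≤ n, ∑_{j=k}^{n} Δ^(α)_{nj} · Δ^(β)_{jk} = Δ^(α+β)_{nk}. -/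
open Filter Finset Topology

private lemma gamma_descP (x : ℝ) (hx : ∀ m : ℤ, x ≠ (m : ℝ)) (r : ℕ) :
    Real.Gamma (x + 1) = (descPochhammer ℤ r).smeval x * Real.Gamma (x - r + 1) := by
  induction r with
  | zero => simp [descPochhammer_zero, Polynomial.smeval_one]
  | succ r ih =>
    have h1 : x - r ≠ 0 := sub_ne_zero.mpr (by exact_mod_cast hx (r : ℤ))
    have h2 : x - ((r : ℝ) + 1) + 1 = x - r := by ring
    rw [descPochhammer_succ_right, Polynomial.smeval_mul, ih,
      Real.Gamma_add_one h1]
    push_cast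
    rw [h2]
    have h3 : (Polynomial.X - ((r : ℕ) : Polynomial ℤ)).smeval x = x - r := by
      simp [Polynomial.smeval_sub, Polynomial.smeval_X, Polynomial.smeval_natCast]
    rw [h3]; ring

private lemma gamma_shift_ne (x : ℝ) (hx : ∀ m : ℤ, x ≠ (m : ℝ)) (r : ℕ) :
    Real.Gamma (x - r + 1) ≠ 0 := by
  refine Real.Gamma_ne_zero fun m hm => ?_
  apply hx ((r : ℤ) - 1 - m)
  push_cast
  linarith

private lemma fracDelta_eq (α : ℝ) (hα : ∀ m : ℤ, α ≠ (m : ℝ)) (n k : ℕ) (h : k ≤ n) :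
    fracDelta α n k =
      (-1 : ℝ) ^ (n - k) * (descPochhammer ℤ (n - k)).smeval α /
        (Nat.factorial (n - k) : ℝ) := by
  rw [fracDelta, if_pos h]
  have hc : α - n + k = α - ((n - k : ℕ) : ℝ) := by
    rw [Nat.cast_sub h]; ring
  rw [hc, gamma_descP α hα (n - k)]
  have hΓ : Real.Gamma (α - (n - k : ℕ) + 1) ≠ 0 := gamma_shift_ne α hα (n - k)
  rw [← mul_assoc]
  rw [mul_div_mul_right _ _ hΓ]

private lemma vandermonde_descP (α β : ℝ) (m : ℕ) :
    ∑ i ∈ Finset.range (m + 1),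
      (descPochhammer ℤ (m - i)).smeval α * (descPochhammer ℤ i).smeval β /
        (((m - i).factorial : ℝ) * (i.factorial : ℝ)) =
      (descPochhammer ℤ m).smeval (α + β) / (m.factorial : ℝ) := by
  have hV := Ring.descPochhammer_smeval_add (R := ℝ) (r := α) (s := β) m (mul_comm α β)
  rw [hV, Finset.Nat.sum_antidiagonal_eq_sum_range_succ_mk]
  rw [Finset.sum_div]
  rw [← Finset.sum_range_reflect]
  refine Finset.sum_congr rfl fun i hi => ?_
  have him : i ≤ m := Nat.lt_succ_iff.mp (Finset.mem_range.mp hi)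
  have h1 : m + 1 - 1 - i = m - i := by omega
  have h2 : m - (m - i) = i := by omega
  rw [h1, h2]
  have hcne : (m.choose i : ℝ) ≠ 0 := Nat.cast_ne_zero.mpr (Nat.choose_pos him).ne'
  have hch : ((m.choose i : ℝ)) * ((i.factorial : ℝ) * ((m - i).factorial : ℝ)) =
      (m.factorial : ℝ) := by
    rw [← mul_assoc]
    exact_mod_cast Nat.choose_mul_factorial_mul_factorial him
  rw [← hch, mul_div_assoc, mul_div_mul_left _ _ hcne]
  ring

/-- `Δ^(α) · Δ^(β) = Δ^(α+β)`. -/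
theorem fracDelta_mul_fracDelta (α β : ℝ) (hα : ∀ m : ℤ, α ≠ (m : ℝ))
    (hβ : ∀ m : ℤ, β ≠ (m : ℝ)) (hαβ : ∀ m : ℤ, α + β ≠ (m : ℝ)) :
    ∀ n k : ℕ, k ≤ n →
      ∑ j ∈ Finset.Icc k n, fracDelta α n j * fracDelta β j k =
        fracDelta (α + β) n k := by
  intro n k hkn
  set m := n - k with hm
  rw [fracDelta_eq (α + β) hαβ n k hkn]
  have hIcc : Finset.Icc k n = Finset.map ⟨fun i => k + i, add_right_injective k⟩
      (Finset.range (m + 1)) := by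
    ext j
    simp only [Finset.mem_Icc, Finset.mem_map, Finset.mem_range,
      Function.Embedding.coeFn_mk]
    constructor
    · rintro ⟨h1, h2⟩; exact ⟨j - k, by omega, by omega⟩
    · rintro ⟨i, hi, rfl⟩; constructor <;> omega
  rw [hIcc, Finset.sum_map]
  simp only [Function.Embedding.coeFn_mk]
  have hterm : ∀ i ∈ Finset.range (m + 1),
      fracDelta α n (k + i) * fracDelta β (k + i) k =
        (-1 : ℝ) ^ m * ((descPochhammer ℤ (m - i)).smeval α *
          (descPochhammer ℤ i).smeval β /
          (((m - i).factorial : ℝ) * (i.factorial : ℝ))) := by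
    intro i hi
    have him : i ≤ m := Nat.lt_succ_iff.mp (Finset.mem_range.mp hi)
    have hki : k + i ≤ n := by omega
    rw [fracDelta_eq α hα n (k + i) hki, fracDelta_eq β hβ (k + i) k (by omega)]
    have e1 : n - (k + i) = m - i := by omega
    have e2 : k + i - k = i := by omega
    rw [e1, e2]
    have hsgn : (-1 : ℝ) ^ (m - i) * (-1 : ℝ) ^ i = (-1 : ℝ) ^ m := by
      rw [← pow_add]; congr 1; omega
    field_simp
    rw [← hsgn]; ring
  rw [Finset.sum_congr rfl hterm, ← Finset.mul_sum, vandermonde_descP α β m]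
  ring
end

section
/- Let α be a real number with α ∉ ℤ. For every sequence x : ℕ → ℝ, applying the operator Δ^(α) to the sequence Δ^(−α)x returns x; that is, for every n, ∑_{j=0}^{n} Δ^(α)_{nj} · (∑_{k=0}^{j} Δ^(−α)_{jk} x_k) = x_n. -/
open Filter Finset Topology

/-- `(Δ^(α)x)_n = ∑_{k=0}^n Δ^(α)_{nk} x_k`. -/
noncomputable def fracDeltaSeq (α : ℝ) (x : ℕ → ℝ) (n : ℕ) : ℝ :=
  ∑ k ∈ Finset.range (n + 1), fracDelta α n k * x k

/-! Up to sign, `Δ^(α)_{nk}` is the generalized binomial coefficient `C(α, n - k)`: the Gamma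
quotient is a descending Pochhammer symbol divided by `(n - k)!`, and none of the Gamma values
involved vanishes because `α ∉ ℤ`. Hence `Δ^(α)` is the matrix of multiplication by the power
series `(1 - t)^α`, and `Δ^(α) Δ^(-α) = 1` is the Vandermonde identity for
`(1 - t)^α (1 - t)^(-α) = 1`. Exchanging the two finite sums then gives the theorem. -/

open Polynomial

theorem Real.Gamma_add_one_eq_descPochhammer_smeval_mul {α : ℝ} (m : ℕ)
    (hα : ∀ i : ℕ, i < m → α ≠ i) :
    Real.Gamma (α + 1) = (descPochhammer ℤ m).smeval α * Real.Gamma (α - m + 1) := by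
  induction m with
  | zero => simp [smeval_one]
  | succ m ih =>
    have hαm : α - m ≠ 0 := sub_ne_zero.2 (hα m m.lt_succ_self)
    have hcast : α - ((m + 1 : ℕ) : ℝ) + 1 = α - m := by push_cast; ring
    rw [ih fun i hi => hα i (hi.trans m.lt_succ_self), descPochhammer_succ_right, hcast,
      Real.Gamma_add_one hαm]
    simp only [smeval_mul, smeval_sub, smeval_X, smeval_natCast, pow_one, pow_zero, nsmul_one]
    ring

theorem Ring.sum_antidiagonal_choose_neg_mul_choose {R : Type*} [Ring R] [BinomialRing R]
    (r : R) (n : ℕ) :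
    ∑ ij ∈ antidiagonal n, Ring.choose (-r) ij.1 * Ring.choose r ij.2 = if n = 0 then 1 else 0 := by
  rw [← Ring.add_choose_eq n (Commute.neg_left (Commute.refl r)), neg_add_cancel,
    Ring.choose_zero_ite]

section FracDelta

variable {α : ℝ}

theorem fracDelta_add_left (hα : ∀ m : ℤ, α ≠ m) (k m : ℕ) :
    fracDelta α (k + m) k = (-1) ^ m * Ring.choose α m := by
  have hΓ : Real.Gamma (α - m + 1) ≠ 0 := by
    refine Real.Gamma_ne_zero fun i h => hα (m - 1 - i) ?_
    push_cast
    linarith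
  have hΓα := Real.Gamma_add_one_eq_descPochhammer_smeval_mul m fun i _ => hα i
  rw [Ring.descPochhammer_eq_factorial_smul_choose, nsmul_eq_mul] at hΓα
  have hcast : α - ((k + m : ℕ) : ℝ) + k + 1 = α - m + 1 := by push_cast; ring
  rw [fracDelta, if_pos (Nat.le_add_right k m), Nat.add_sub_cancel_left, hcast, hΓα]
  field_simp

theorem sum_Ico_fracDelta_mul_fracDelta_neg (hα : ∀ m : ℤ, α ≠ m) {n k : ℕ} (hkn : k ≤ n) :
    ∑ j ∈ Ico k (n + 1), fracDelta α n j * fracDelta (-α) j k = if k = n then 1 else 0 := by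
  have hα_neg : ∀ m : ℤ, -α ≠ m := fun m h => hα (-m) (by push_cast; linarith)
  obtain ⟨M, rfl⟩ := Nat.exists_eq_add_of_le hkn
  have hterm : ∀ ij ∈ antidiagonal M, fracDelta α (k + M) (k + ij.1) * fracDelta (-α) (k + ij.1) k
      = (-1) ^ M * (Ring.choose (-α) ij.1 * Ring.choose α ij.2) := by
    rintro ⟨a, b⟩ hab
    rw [HasAntidiagonal.mem_antidiagonal] at hab
    subst hab
    rw [← add_assoc, fracDelta_add_left hα, fracDelta_add_left hα_neg, pow_add]
    ring
  calc ∑ j ∈ Ico k (k + M + 1), fracDelta α (k + M) j * fracDelta (-α) j k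
      = ∑ ij ∈ antidiagonal M, fracDelta α (k + M) (k + ij.1) * fracDelta (-α) (k + ij.1) k := by
        rw [sum_Ico_eq_sum_range, Nat.sum_antidiagonal_eq_sum_range_succ_mk,
          show k + M + 1 - k = M + 1 by omega]
    _ = (-1) ^ M * (if M = 0 then 1 else 0) := by
        rw [sum_congr rfl hterm, ← mul_sum, Ring.sum_antidiagonal_choose_neg_mul_choose]
    _ = if k = k + M then 1 else 0 := by
        by_cases hM : M = 0 <;> simp [hM]

end FracDelta

/-- `Δ^(α)(Δ^(−α) x) = x` for every sequence `x`. -/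
theorem fracDelta_apply_fracDelta_neg_apply (α : ℝ) (hα : ∀ m : ℤ, α ≠ (m : ℝ)) :
    ∀ (x : ℕ → ℝ) (n : ℕ),
      ∑ j ∈ Finset.range (n + 1),
        fracDelta α n j * (∑ k ∈ Finset.range (j + 1), fracDelta (-α) j k * x k) = x n := by
  intro x n
  calc ∑ j ∈ range (n + 1), fracDelta α n j * ∑ k ∈ range (j + 1), fracDelta (-α) j k * x k
      = ∑ k ∈ range (n + 1),
          (∑ j ∈ Ico k (n + 1), fracDelta α n j * fracDelta (-α) j k) * x k := by
        simp only [mul_sum, sum_mul, range_eq_Ico, ← sum_Ico_Ico_comm, mul_assoc]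
    _ = ∑ k ∈ range (n + 1), if k = n then x k else 0 := by
        refine sum_congr rfl fun k hk => ?_
        rw [sum_Ico_fracDelta_mul_fracDelta_neg hα (Nat.lt_succ_iff.1 (mem_range.1 hk)),
          ite_mul, one_mul, zero_mul]
    _ = x n := by simp
end

section
/- Let α be a real number with α ∉ ℤ, and let X be any of the spaces c₀(Δ^(α)), c(Δ^(α)), ℓ∞(Δ^(α)) equipped with the norm ‖x‖ = sup_n |(Δ^(α)x)_n|. Then X is a complete normed linear space (a Banach space) and each coordinate functional x ↦ x_n is a continuous linear functional on X; that is, X is a BK space. -/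
/-!
`Δ^(α)` is lower triangular with unit diagonal, so `x ↦ Δ^(α)x` is a linear bijection of `ℝ^ℕ`
(forward substitution), and `x n` is a fixed combination of `(Δ^(α)x)_0, …, (Δ^(α)x)_n`, which
bounds `|x n|` by a multiple of `‖x‖`. Hence `X` is the preimage of `c₀`, `c` or `ℓ∞` under a
bijection carrying `‖·‖` to the sup norm, and these three spaces are complete because they are
closed under uniform limits.
-/

open Filter Finset Topology

/-- Membership in `c₀(Δ^(α))`. -/
def memC0Delta (α : ℝ) (x : ℕ → ℝ) : Prop :=
  Tendsto (fracDeltaSeq α x) atTop (nhds 0)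

/-- Membership in `c(Δ^(α))`. -/
def memCDelta (α : ℝ) (x : ℕ → ℝ) : Prop :=
  ∃ L : ℝ, Tendsto (fracDeltaSeq α x) atTop (nhds L)

/-- Membership in `ℓ∞(Δ^(α))`. -/
def memLinfDelta (α : ℝ) (x : ℕ → ℝ) : Prop :=
  ∃ C : ℝ, ∀ n, |fracDeltaSeq α x n| ≤ C

/-- The norm `‖x‖ = sup_n |(Δ^(α)x)_n|`. -/
noncomputable def deltaNorm (α : ℝ) (x : ℕ → ℝ) : ℝ :=
  ⨆ n, |fracDeltaSeq α x n|

def lowerTriMulVec (A : ℕ → ℕ → ℝ) : (ℕ → ℝ) →ₗ[ℝ] (ℕ → ℝ) where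
  toFun x n := ∑ k ∈ range (n + 1), A n k * x k
  map_add' x y := by ext n; simp [mul_add, sum_add_distrib]
  map_smul' c x := by ext n; simp [mul_left_comm, mul_sum]

section UnitLowerTriangular

variable {A : ℕ → ℕ → ℝ}

theorem lowerTriMulVec_apply_eq_add (hA : ∀ n, A n n = 1) (x : ℕ → ℝ) (n : ℕ) :
    lowerTriMulVec A x n = x n + ∑ k ∈ range n, A n k * x k := by
  simp [lowerTriMulVec, sum_range_succ, hA, add_comm]

variable (A) in
noncomputable def forwardSubst (y : ℕ → ℝ) : ℕ → ℝ
  | n => y n - ∑ k : Fin n, A n k * forwardSubst y k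

theorem lowerTriMulVec_forwardSubst (hA : ∀ n, A n n = 1) (y : ℕ → ℝ) :
    lowerTriMulVec A (forwardSubst A y) = y := by
  ext n
  rw [lowerTriMulVec_apply_eq_add hA, forwardSubst,
    Fin.sum_univ_eq_sum_range (fun k => A n k * forwardSubst A y k)]
  ring

theorem lowerTriMulVec_surjective (hA : ∀ n, A n n = 1) :
    Function.Surjective (lowerTriMulVec A) :=
  fun y => ⟨_, lowerTriMulVec_forwardSubst hA y⟩

variable (A) in
-- Read off from `x n = (A x) n - ∑ k < n, A n k * x k` by induction.
noncomputable def coordBound : ℕ → ℝ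
  | n => 1 + ∑ k : Fin n, |A n k| * coordBound k

theorem abs_le_coordBound_mul (hA : ∀ n, A n n = 1) {x : ℕ → ℝ} {M : ℝ}
    (hM : ∀ k, |lowerTriMulVec A x k| ≤ M) (n : ℕ) : |x n| ≤ coordBound A n * M := by
  induction n using Nat.strong_induction_on with
  | _ n ih =>
    have hx : x n = lowerTriMulVec A x n - ∑ k ∈ range n, A n k * x k := by
      rw [lowerTriMulVec_apply_eq_add hA]; ring
    rw [coordBound, Fin.sum_univ_eq_sum_range (fun k => |A n k| * coordBound A k), add_mul,
      one_mul, sum_mul, hx]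
    calc |lowerTriMulVec A x n - ∑ k ∈ range n, A n k * x k|
        ≤ |lowerTriMulVec A x n| + ∑ k ∈ range n, |A n k| * |x k| := by
          refine (abs_sub _ _).trans (add_le_add_right ((abs_sum_le_sum_abs _ _).trans ?_) _)
          simp only [abs_mul, le_refl]
      _ ≤ M + ∑ k ∈ range n, |A n k| * coordBound A k * M :=
          add_le_add (hM n) <| sum_le_sum fun k hk => by
            rw [mul_assoc]
            exact mul_le_mul_of_nonneg_left (ih k (mem_range.1 hk)) (abs_nonneg _)

theorem lowerTriMulVec_injective (hA : ∀ n, A n n = 1) :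
    Function.Injective (lowerTriMulVec A) := by
  refine (injective_iff_map_eq_zero _).2 fun x hx => funext fun n => ?_
  simpa using abs_le_coordBound_mul hA (x := x) (M := 0) (by simp [hx]) n

end UnitLowerTriangular

-- `Real.Gamma` is `0` at its poles, so the diagonal entries are `1` only away from them.
theorem fracDelta_self {α : ℝ} (hα : ∀ m : ℤ, α ≠ m) (n : ℕ) : fracDelta α n n = 1 := by
  have hΓ : Real.Gamma (α + 1) ≠ 0 :=
    Real.Gamma_ne_zero fun m hm => hα (-m - 1) (by push_cast; linarith)
  simp [fracDelta, hΓ]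

def nullSeqs : Submodule ℝ (ℕ → ℝ) where
  carrier := {y | Tendsto y atTop (𝓝 0)}
  zero_mem' := tendsto_const_nhds
  add_mem' hy hz := add_zero (0 : ℝ) ▸ hy.add hz
  smul_mem' c _ hy := smul_zero (A := ℝ) c ▸ hy.const_smul c

def convergentSeqs : Submodule ℝ (ℕ → ℝ) where
  carrier := {y | ∃ L, Tendsto y atTop (𝓝 L)}
  zero_mem' := ⟨0, tendsto_const_nhds⟩
  add_mem' := fun ⟨L, hy⟩ ⟨L', hz⟩ => ⟨L + L', hy.add hz⟩
  smul_mem' c _ := fun ⟨L, hy⟩ => ⟨c * L, hy.const_mul c⟩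

def boundedSeqs : Submodule ℝ (ℕ → ℝ) where
  carrier := {y | ∃ C, ∀ n, |y n| ≤ C}
  zero_mem' := ⟨0, by simp⟩
  add_mem' := fun ⟨C, hy⟩ ⟨C', hz⟩ =>
    ⟨C + C', fun n => (abs_add_le _ _).trans (add_le_add (hy n) (hz n))⟩
  smul_mem' c _ := fun ⟨C, hy⟩ =>
    ⟨|c| * C, fun n => by simpa [abs_mul] using mul_le_mul_of_nonneg_left (hy n) (abs_nonneg c)⟩

theorem nullSeqs_le_convergentSeqs : nullSeqs ≤ convergentSeqs := fun _ hy => ⟨0, hy⟩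

theorem convergentSeqs_le_boundedSeqs : convergentSeqs ≤ boundedSeqs := fun _ ⟨_, hy⟩ =>
  let ⟨C, hC⟩ := hy.abs.bddAbove_range
  ⟨C, fun n => hC ⟨n, rfl⟩⟩

def IsUniformlyClosed (Y : Set (ℕ → ℝ)) : Prop :=
  ∀ ⦃u : ℕ → ℕ → ℝ⦄ ⦃y : ℕ → ℝ⦄, (∀ i, u i ∈ Y) → TendstoUniformly u y atTop → y ∈ Y

theorem isUniformlyClosed_nullSeqs : IsUniformlyClosed nullSeqs := fun _ _ hu h =>
  h.tendsto_of_eventually_tendsto (Eventually.of_forall hu) tendsto_const_nhds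

theorem cauchySeq_of_tendstoUniformly {u : ℕ → ℕ → ℝ} {y : ℕ → ℝ} (hu : ∀ i, CauchySeq (u i))
    (h : TendstoUniformly u y atTop) : CauchySeq y := by
  simp only [cauchySeq_iff_tendsto_dist_atTop_0, Real.dist_eq] at hu ⊢
  have hsub : TendstoUniformly (fun i (p : ℕ × ℕ) => u i p.1 - u i p.2)
      (fun p => y p.1 - y p.2) atTop :=
    (h.comp Prod.fst).sub (h.comp Prod.snd)
  refine (tendsto_zero_iff_abs_tendsto_zero _).1 <| hsub.tendsto_of_eventually_tendsto
    (Eventually.of_forall fun i => (tendsto_zero_iff_abs_tendsto_zero _).2 (hu i))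
    tendsto_const_nhds

theorem isUniformlyClosed_convergentSeqs : IsUniformlyClosed convergentSeqs := fun _ _ hu h =>
  cauchySeq_tendsto_of_complete <|
    cauchySeq_of_tendstoUniformly (fun i => let ⟨_, hL⟩ := hu i; hL.cauchySeq) h

theorem isUniformlyClosed_boundedSeqs : IsUniformlyClosed boundedSeqs := by
  intro u y hu h
  obtain ⟨i, hi⟩ := (Metric.tendstoUniformly_iff.1 h 1 one_pos).exists
  obtain ⟨C, hC⟩ := hu i
  refine ⟨C + 1, fun n => ?_⟩
  have := hi n
  rw [Real.dist_eq] at this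
  linarith [abs_sub_abs_le_abs_sub (y n) (u i n), hC n]

noncomputable def supAbs (y : ℕ → ℝ) : ℝ := ⨆ n, |y n|

theorem supAbs_nonneg (y : ℕ → ℝ) : 0 ≤ supAbs y :=
  Real.iSup_nonneg fun n => abs_nonneg (y n)

theorem supAbs_le {y : ℕ → ℝ} {M : ℝ} (h : ∀ n, |y n| ≤ M) : supAbs y ≤ M :=
  ciSup_le h

theorem abs_le_supAbs {y : ℕ → ℝ} (hy : y ∈ boundedSeqs) (n : ℕ) : |y n| ≤ supAbs y :=
  let ⟨C, hC⟩ := hy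
  le_ciSup ⟨C, Set.forall_mem_range.2 hC⟩ n

theorem supAbs_add_le {y z : ℕ → ℝ} (hy : y ∈ boundedSeqs) (hz : z ∈ boundedSeqs) :
    supAbs (y + z) ≤ supAbs y + supAbs z :=
  supAbs_le fun n => (abs_add_le _ _).trans (add_le_add (abs_le_supAbs hy n) (abs_le_supAbs hz n))

theorem supAbs_smul (c : ℝ) (y : ℕ → ℝ) : supAbs (c • y) = |c| * supAbs y := by
  simp only [supAbs, Pi.smul_apply, smul_eq_mul, abs_mul, Real.mul_iSup_of_nonneg (abs_nonneg c)]

theorem supAbs_eq_zero_iff {y : ℕ → ℝ} (hy : y ∈ boundedSeqs) : supAbs y = 0 ↔ y = 0 := by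
  refine ⟨fun h => funext fun n => abs_nonpos_iff.1 (h ▸ abs_le_supAbs hy n), ?_⟩
  rintro rfl
  simp [supAbs]

theorem tendsto_supAbs_sub_of_tendstoUniformly {u : ℕ → ℕ → ℝ} {y : ℕ → ℝ}
    (h : TendstoUniformly u y atTop) : Tendsto (fun i => supAbs (u i - y)) atTop (𝓝 0) := by
  refine tendsto_order.2 ⟨fun a ha => Eventually.of_forall fun i => ha.trans_le (supAbs_nonneg _),
    fun ε hε => ?_⟩
  filter_upwards [Metric.tendstoUniformly_iff.1 h (ε / 2) (half_pos hε)] with i hi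
  refine (supAbs_le fun n => ?_).trans_lt (half_lt_self hε)
  rw [Pi.sub_apply, abs_sub_comm]
  exact (hi n).le

theorem exists_tendsto_supAbs_sub_of_cauchy {Y : Submodule ℝ (ℕ → ℝ)} (hbdd : Y ≤ boundedSeqs)
    (hclosed : IsUniformlyClosed Y) {u : ℕ → ℕ → ℝ} (hu : ∀ i, u i ∈ Y)
    (hcauchy : ∀ ε > 0, ∃ N, ∀ i j, N ≤ i → N ≤ j → supAbs (u i - u j) < ε) :
    ∃ y ∈ Y, Tendsto (fun i => supAbs (u i - y)) atTop (𝓝 0) := by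
  have hunif : UniformCauchySeqOn u atTop Set.univ := by
    refine Metric.uniformCauchySeqOn_iff.2 fun ε hε => ?_
    obtain ⟨N, hN⟩ := hcauchy ε hε
    refine ⟨N, fun i hi j hj n _ => (abs_le_supAbs (hbdd (sub_mem (hu i) (hu j))) n).trans_lt ?_⟩
    exact hN i j hi hj
  choose y hy using fun n => cauchySeq_tendsto_of_complete (hunif.cauchySeq (Set.mem_univ n))
  have hlim : TendstoUniformly u y atTop :=
    tendstoUniformlyOn_univ.1 (hunif.tendstoUniformlyOn_of_tendsto fun n _ => hy n)
  exact ⟨y, hclosed hu hlim, tendsto_supAbs_sub_of_tendstoUniformly hlim⟩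

theorem deltaNorm_eq_supAbs (α : ℝ) (x : ℕ → ℝ) :
    deltaNorm α x = supAbs (lowerTriMulVec (fracDelta α) x) := rfl

/-- Each of `c₀(Δ^(α))`, `c(Δ^(α))`, `ℓ∞(Δ^(α))`, with the norm
`‖x‖ = sup_n |(Δ^(α)x)_n|`, is a complete normed linear (BK) space on which all
coordinate functionals are continuous. -/
theorem fracDelta_spaces_BK (α : ℝ) (hα : ∀ m : ℤ, α ≠ (m : ℝ))
    (X : Set (ℕ → ℝ))
    (hX : X = {x | memC0Delta α x} ∨ X = {x | memCDelta α x} ∨ X = {x | memLinfDelta α x}) :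
    -- `X` is a linear subspace of the space of all sequences
    ((0 : ℕ → ℝ) ∈ X) ∧
    (∀ x y : ℕ → ℝ, x ∈ X → y ∈ X → x + y ∈ X) ∧
    (∀ (c : ℝ) (x : ℕ → ℝ), x ∈ X → c • x ∈ X) ∧
    -- `deltaNorm` is a norm on `X`
    (∀ x ∈ X, 0 ≤ deltaNorm α x) ∧
    (∀ x ∈ X, (deltaNorm α x = 0 ↔ x = 0)) ∧
    (∀ x ∈ X, ∀ y ∈ X, deltaNorm α (x + y) ≤ deltaNorm α x + deltaNorm α y) ∧
    (∀ (c : ℝ), ∀ x ∈ X, deltaNorm α (c • x) = |c| * deltaNorm α x) ∧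
    -- `X` is complete with respect to this norm
    (∀ u : ℕ → (ℕ → ℝ), (∀ i, u i ∈ X) →
      (∀ ε : ℝ, 0 < ε → ∃ N : ℕ, ∀ i j : ℕ, N ≤ i → N ≤ j → deltaNorm α (u i - u j) < ε) →
      ∃ x ∈ X, Tendsto (fun i => deltaNorm α (u i - x)) atTop (nhds 0)) ∧
    -- every coordinate functional `x ↦ x n` is continuous (bounded) on `X`
    (∀ n : ℕ, ∃ C : ℝ, ∀ x ∈ X, ∀ y ∈ X, |x n - y n| ≤ C * deltaNorm α (x - y)) := by
  set T := lowerTriMulVec (fracDelta α)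
  have hdiag := fracDelta_self hα
  obtain ⟨Y, hbdd, hclosed, rfl⟩ : ∃ Y : Submodule ℝ (ℕ → ℝ),
      Y ≤ boundedSeqs ∧ IsUniformlyClosed Y ∧ X = Y.comap T := by
    rcases hX with rfl | rfl | rfl
    · exact ⟨nullSeqs, nullSeqs_le_convergentSeqs.trans convergentSeqs_le_boundedSeqs,
        isUniformlyClosed_nullSeqs, rfl⟩
    · exact ⟨convergentSeqs, convergentSeqs_le_boundedSeqs, isUniformlyClosed_convergentSeqs, rfl⟩
    · exact ⟨boundedSeqs, le_rfl, isUniformlyClosed_boundedSeqs, rfl⟩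
  simp only [deltaNorm_eq_supAbs, SetLike.mem_coe]
  refine ⟨zero_mem _, fun x y => add_mem, fun c x => Submodule.smul_mem _ c,
    fun x _ => supAbs_nonneg _, fun x hx => ?_, fun x hx y hy => ?_, fun c x _ => ?_,
    fun u hu hcauchy => ?_, fun n => ?_⟩
  · rw [supAbs_eq_zero_iff (hbdd hx), (lowerTriMulVec_injective hdiag).eq_iff' (map_zero T)]
  · exact map_add T x y ▸ supAbs_add_le (hbdd hx) (hbdd hy)
  · rw [map_smul, supAbs_smul]
  · simp only [map_sub] at hcauchy ⊢
    obtain ⟨y, hy, hlim⟩ := exists_tendsto_supAbs_sub_of_cauchy hbdd hclosed hu hcauchy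
    obtain ⟨x, rfl⟩ := lowerTriMulVec_surjective hdiag y
    exact ⟨x, hy, hlim⟩
  · refine ⟨coordBound (fracDelta α) n, fun x hx y hy => ?_⟩
    exact abs_le_coordBound_mul hdiag (abs_le_supAbs (hbdd (sub_mem hx hy))) n
end

section
/- Let α be a real number with α ∉ ℤ and a : ℕ → ℝ. Then a belongs to the β-dual of ℓ∞(Δ^(α)) if and only if (1) for every k the series R_k a = ∑_{j=k}^∞ (−1)^{j−k} Γ(−α+1)/((j−k)!·Γ(−α−j+k+1)) a_j converges and ∑_{k=0}^∞ |R_k a| < ∞, and (2) lim_{n→∞} ∑_{k=0}^{n} |w_{nk}| = 0, where w_{nk} = ∑_{j=n}^∞ (−1)^{j−k} Γ(−α+1)/((j−k)!·Γ(−α−j+k+1)) a_j. Moreover, if a is in the β-dual then for every x ∈ ℓ∞(Δ^(α)) one has ∑_{k=0}^∞ a_k x_k = ∑_{k=0}^∞ (R_k a)·(Δ^(α)x)_k. -/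
open Filter Finset Topology

/-- Classical convergence of the series `∑_{j=0}^∞ f j` to `L`. -/
def SeriesHasSum (f : ℕ → ℝ) (L : ℝ) : Prop :=
  Tendsto (fun m => ∑ j ∈ Finset.range m, f j) atTop (nhds L)

namespace BetaAux

/-- generalized binomial coefficient `x choose m`. -/
noncomputable def gbin (x : ℝ) (m : ℕ) : ℝ := (∏ i ∈ Finset.range m, (x - i)) / m.factorial

lemma gbin_zero (x : ℝ) : gbin x 0 = 1 := by simp [gbin]

lemma gbin_succ (x : ℝ) (m : ℕ) :
    ((m : ℝ) + 1) * gbin x (m + 1) = (x - m) * gbin x m := by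
  unfold gbin
  rw [Finset.prod_range_succ, Nat.factorial_succ]
  push_cast
  have h1 : (m.factorial : ℝ) ≠ 0 := by exact_mod_cast m.factorial_ne_zero
  have h2 : ((m : ℝ) + 1) ≠ 0 := by positivity
  field_simp

lemma Gamma_prod (x : ℝ) (hx : ∀ m : ℤ, x ≠ m) (m : ℕ) :
    Real.Gamma (x + 1) = (∏ i ∈ Finset.range m, (x - i)) * Real.Gamma (x - m + 1) := by
  induction m with
  | zero => simp
  | succ m ih =>
    rw [ih, Finset.prod_range_succ]
    have hne : x - m ≠ 0 := by
      intro h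
      have := sub_eq_zero.mp h
      exact hx (m : ℤ) (by push_cast; linarith)
    have : Real.Gamma (x - m + 1) = (x - m) * Real.Gamma (x - m) := Real.Gamma_add_one hne
    rw [this]
    have : x - (m + 1 : ℕ) + 1 = x - m := by push_cast; ring
    rw [this]
    ring

lemma Gamma_ne_zero' (x : ℝ) (hx : ∀ m : ℤ, x ≠ m) (m : ℕ) :
    Real.Gamma (x - m + 1) ≠ 0 := by
  apply Real.Gamma_ne_zero
  intro j h
  apply hx (m - 1 - j)
  push_cast
  linarith

lemma fracDelta_eq (x : ℝ) (hx : ∀ m : ℤ, x ≠ m) {n k : ℕ} (h : k ≤ n) :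
    fracDelta x n k = (-1 : ℝ) ^ (n - k) * gbin x (n - k) := by
  unfold fracDelta
  rw [if_pos h]
  have hc : x - n + k = x - (n - k : ℕ) := by
    have : ((n - k : ℕ) : ℝ) = (n : ℝ) - k := by
      push_cast [Nat.cast_sub h]; ring
    rw [this]; ring
  rw [hc, Gamma_prod x hx (n - k)]
  have h1 : ((n - k).factorial : ℝ) ≠ 0 := by exact_mod_cast (n - k).factorial_ne_zero
  have h2 := Gamma_ne_zero' x hx (n - k)
  unfold gbin
  have h2' : Real.Gamma (x - ((n:ℝ) - (k:ℝ)) + 1) ≠ 0 := by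
    have : x - ((n:ℝ) - (k:ℝ)) = x - ((n - k : ℕ) : ℝ) := by
      push_cast [Nat.cast_sub h]; ring
    rw [this]; exact h2
  field_simp

/-- Vandermonde key step. -/
lemma vander_step (x y : ℝ) (r : ℕ) :
    ((r : ℝ) + 1) * (∑ i ∈ Finset.range (r + 2), gbin x i * gbin y (r + 1 - i)) =
      (x + y - r) * ∑ i ∈ Finset.range (r + 1), gbin x i * gbin y (r - i) := by
  have key : ∀ i ∈ Finset.range (r + 2), ((r : ℝ) + 1) * (gbin x i * gbin y (r + 1 - i)) =
      (i : ℝ) * gbin x i * gbin y (r + 1 - i) +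
      gbin x i * (((r + 1 - i : ℕ) : ℝ) * gbin y (r + 1 - i)) := by
    intro i hi
    have hi' : i ≤ r + 1 := by simpa [Nat.lt_succ_iff] using Finset.mem_range.mp hi
    have : ((r + 1 - i : ℕ) : ℝ) = (r : ℝ) + 1 - i := by push_cast [Nat.cast_sub hi']; ring
    rw [this]; ring
  rw [Finset.mul_sum, Finset.sum_congr rfl key, Finset.sum_add_distrib]
  -- first sum
  have e1 : ∑ i ∈ Finset.range (r + 2), (i : ℝ) * gbin x i * gbin y (r + 1 - i) =
      ∑ i ∈ Finset.range (r + 1), (x - i) * gbin x i * gbin y (r - i) := by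
    rw [Finset.sum_range_succ' (fun i => (i : ℝ) * gbin x i * gbin y (r + 1 - i)) (r+1)]
    simp only [Nat.cast_zero, zero_mul, add_zero]
    apply Finset.sum_congr rfl
    intro i hi
    have h1 : r + 1 - (i + 1) = r - i := by omega
    have h2 : ((i : ℝ) + 1) * gbin x (i + 1) = (x - i) * gbin x i := gbin_succ x i
    rw [h1]
    push_cast
    calc ((i : ℝ) + 1) * gbin x (i + 1) * gbin y (r - i)
        = (((i : ℝ) + 1) * gbin x (i + 1)) * gbin y (r - i) := by ring
      _ = (x - i) * gbin x i * gbin y (r - i) := by rw [h2]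
  -- second sum
  have e2 : ∑ i ∈ Finset.range (r + 2), gbin x i * (((r + 1 - i : ℕ) : ℝ) * gbin y (r + 1 - i)) =
      ∑ i ∈ Finset.range (r + 1), (y - ((r - i : ℕ) : ℝ)) * gbin x i * gbin y (r - i) := by
    rw [Finset.sum_range_succ]
    simp only [Nat.sub_self, Nat.cast_zero, zero_mul, mul_zero, add_zero]
    apply Finset.sum_congr rfl
    intro i hi
    have hi' : i ≤ r := by simpa [Nat.lt_succ_iff] using Finset.mem_range.mp hi
    have h1 : r + 1 - i = (r - i) + 1 := by omega
    rw [h1]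
    have h2 : (((r - i) : ℕ) + 1 : ℝ) * gbin y ((r - i) + 1) = (y - (r - i : ℕ)) * gbin y (r - i) :=
      gbin_succ y (r - i)
    push_cast at h2 ⊢
    calc gbin x i * ((((r - i) : ℕ) + 1 : ℝ) * gbin y ((r - i) + 1))
        = ((((r - i) : ℕ) + 1 : ℝ) * gbin y ((r - i) + 1)) * gbin x i := by ring
      _ = (y - ((r - i : ℕ) : ℝ)) * gbin x i * gbin y (r - i) := by rw [h2]; ring
  rw [e1, e2, ← Finset.sum_add_distrib, Finset.mul_sum]
  apply Finset.sum_congr rfl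
  intro i hi
  have hi' : i ≤ r := by simpa [Nat.lt_succ_iff] using Finset.mem_range.mp hi
  have : ((r - i : ℕ) : ℝ) = (r : ℝ) - i := by push_cast [Nat.cast_sub hi']; ring
  rw [this]; ring

lemma vandermonde (x y : ℝ) (r : ℕ) :
    ∑ i ∈ Finset.range (r + 1), gbin x i * gbin y (r - i) = gbin (x + y) r := by
  induction r with
  | zero => simp [gbin_zero]
  | succ r ih =>
    have hs := vander_step x y r
    rw [ih] at hs
    have hg := gbin_succ (x + y) r
    have hr : ((r : ℝ) + 1) ≠ 0 := by positivity
    have : ((r : ℝ) + 1) * (∑ i ∈ Finset.range (r + 2), gbin x i * gbin y (r + 1 - i)) =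
        ((r : ℝ) + 1) * gbin (x + y) (r + 1) := by rw [hs, hg]
    exact mul_left_cancel₀ hr this

lemma gbin_zero_left (r : ℕ) : gbin 0 r = if r = 0 then 1 else 0 := by
  cases r with
  | zero => simp [gbin_zero]
  | succ r =>
    simp only [Nat.succ_ne_zero, if_false]
    unfold gbin
    rw [Finset.prod_eq_zero (Finset.mem_range.mpr (Nat.succ_pos r)) (by simp)]
    simp

end BetaAux

namespace BetaAux

noncomputable def cc (α : ℝ) (j : ℕ) : ℝ := (-1 : ℝ)^j * gbin (-α) j
noncomputable def dd (α : ℝ) (j : ℕ) : ℝ := (-1 : ℝ)^j * gbin α j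

lemma conv_delta (α : ℝ) (r : ℕ) :
    ∑ i ∈ Finset.range (r + 1), cc α i * dd α (r - i) = if r = 0 then 1 else 0 := by
  have e : ∀ i ∈ Finset.range (r + 1), cc α i * dd α (r - i) =
      (-1 : ℝ)^r * (gbin (-α) i * gbin α (r - i)) := by
    intro i hi
    have hi' : i ≤ r := by simpa [Nat.lt_succ_iff] using Finset.mem_range.mp hi
    unfold cc dd
    rw [show (-1 : ℝ)^r = (-1 : ℝ)^(i + (r - i)) by rw [Nat.add_sub_cancel' hi'], pow_add]
    ring
  rw [Finset.sum_congr rfl e, ← Finset.mul_sum, vandermonde, neg_add_cancel, gbin_zero_left]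
  cases r with
  | zero => simp
  | succ r => simp

lemma conv_delta' (α : ℝ) (r : ℕ) :
    ∑ i ∈ Finset.range (r + 1), dd α i * cc α (r - i) = if r = 0 then 1 else 0 := by
  rw [← conv_delta α r, ← Finset.sum_range_reflect (fun i => cc α i * dd α (r - i)) (r+1)]
  apply Finset.sum_congr rfl
  intro i hi
  have hi' : i ≤ r := by simpa [Nat.lt_succ_iff] using Finset.mem_range.mp hi
  have h1 : r + 1 - 1 - i = r - i := by omega
  have h2 : r - (r - i) = i := by omega
  rw [h1, h2, mul_comm]

lemma sum_swap_tri (m : ℕ) (F : ℕ → ℕ → ℝ) :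
    ∑ k ∈ Finset.range m, ∑ j ∈ Finset.range (k + 1), F k j =
      ∑ j ∈ Finset.range m, ∑ k ∈ Finset.Ico j m, F k j := by
  simp only [Finset.range_eq_Ico]
  exact (Finset.sum_Ico_Ico_comm 0 m fun j k => F k j).symm

lemma hα_neg {α : ℝ} (hα : ∀ m : ℤ, α ≠ (m : ℝ)) : ∀ m : ℤ, (-α) ≠ (m : ℝ) := by
  intro m h
  exact hα (-m) (by push_cast; linarith)

lemma fracDelta_eq_dd {α : ℝ} (hα : ∀ m : ℤ, α ≠ (m : ℝ)) {n k : ℕ} (h : k ≤ n) :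
    fracDelta α n k = dd α (n - k) :=
  fracDelta_eq α hα h

lemma fracDelta_neg_eq_cc {α : ℝ} (hα : ∀ m : ℤ, α ≠ (m : ℝ)) {n k : ℕ} (h : k ≤ n) :
    fracDelta (-α) n k = cc α (n - k) :=
  fracDelta_eq (-α) (hα_neg hα) h

/-- inversion: x is recovered from its fractional difference. -/
lemma invB {α : ℝ} (hα : ∀ m : ℤ, α ≠ (m : ℝ)) (x : ℕ → ℝ) (n : ℕ) :
    ∑ j ∈ Finset.range (n + 1), cc α (n - j) * fracDeltaSeq α x j = x n := by
  have e : ∀ j ∈ Finset.range (n + 1), cc α (n - j) * fracDeltaSeq α x j =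
      ∑ k ∈ Finset.range (j + 1), cc α (n - j) * (dd α (j - k) * x k) := by
    intro j hj
    unfold fracDeltaSeq
    rw [Finset.mul_sum]
    apply Finset.sum_congr rfl
    intro k hk
    rw [fracDelta_eq_dd hα (by simpa [Nat.lt_succ_iff] using Finset.mem_range.mp hk)]
  rw [Finset.sum_congr rfl e, sum_swap_tri]
  have e2 : ∀ k ∈ Finset.range (n + 1),
      ∑ j ∈ Finset.Ico k (n + 1), cc α (n - j) * (dd α (j - k) * x k) =
      (if n - k = 0 then 1 else 0) * x k := by
    intro k hk
    have hk' : k ≤ n := by simpa [Nat.lt_succ_iff] using Finset.mem_range.mp hk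
    rw [Finset.sum_Ico_eq_sum_range]
    have hnk : n + 1 - k = (n - k) + 1 := by omega
    rw [hnk]
    have e3 : ∀ i ∈ Finset.range ((n - k) + 1),
        cc α (n - (k + i)) * (dd α (k + i - k) * x k) =
        (dd α i * cc α ((n - k) - i)) * x k := by
      intro i hi
      have hi' : i ≤ n - k := by simpa [Nat.lt_succ_iff] using Finset.mem_range.mp hi
      have h1 : n - (k + i) = (n - k) - i := by omega
      have h2 : k + i - k = i := by omega
      rw [h1, h2]; ring
    rw [Finset.sum_congr rfl e3, ← Finset.sum_mul, conv_delta']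
  rw [Finset.sum_congr rfl e2]
  rw [Finset.sum_eq_single n]
  · simp
  · intro j hj hjn
    have : j ≤ n := by simpa [Nat.lt_succ_iff] using Finset.mem_range.mp hj
    have : n - j ≠ 0 := by omega
    simp [this]
  · intro h
    exact absurd (Finset.self_mem_range_succ n) h

/-- inversion: any `y` arises as fractional difference. -/
lemma invA {α : ℝ} (hα : ∀ m : ℤ, α ≠ (m : ℝ)) (y : ℕ → ℝ) (n : ℕ) :
    fracDeltaSeq α (fun n => ∑ j ∈ Finset.range (n + 1), cc α (n - j) * y j) n = y n := by
  unfold fracDeltaSeq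
  have e : ∀ k ∈ Finset.range (n + 1),
      fracDelta α n k * (∑ j ∈ Finset.range (k + 1), cc α (k - j) * y j) =
      ∑ j ∈ Finset.range (k + 1), dd α (n - k) * (cc α (k - j) * y j) := by
    intro k hk
    rw [fracDelta_eq_dd hα (by simpa [Nat.lt_succ_iff] using Finset.mem_range.mp hk),
      Finset.mul_sum]
  rw [Finset.sum_congr rfl e, sum_swap_tri]
  have e2 : ∀ j ∈ Finset.range (n + 1),
      ∑ k ∈ Finset.Ico j (n + 1), dd α (n - k) * (cc α (k - j) * y j) =
      (if n - j = 0 then 1 else 0) * y j := by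
    intro j hj
    have hj' : j ≤ n := by simpa [Nat.lt_succ_iff] using Finset.mem_range.mp hj
    rw [Finset.sum_Ico_eq_sum_range]
    have hnj : n + 1 - j = (n - j) + 1 := by omega
    rw [hnj]
    have e3 : ∀ i ∈ Finset.range ((n - j) + 1),
        dd α (n - (j + i)) * (cc α (j + i - j) * y j) =
        (cc α i * dd α ((n - j) - i)) * y j := by
      intro i hi
      have hi' : i ≤ n - j := by simpa [Nat.lt_succ_iff] using Finset.mem_range.mp hi
      have h1 : n - (j + i) = (n - j) - i := by omega
      have h2 : j + i - j = i := by omega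
      rw [h1, h2]; ring
    rw [Finset.sum_congr rfl e3, ← Finset.sum_mul, conv_delta]
  rw [Finset.sum_congr rfl e2]
  rw [Finset.sum_eq_single n]
  · simp
  · intro j hj hjn
    have : j ≤ n := by simpa [Nat.lt_succ_iff] using Finset.mem_range.mp hj
    have : n - j ≠ 0 := by omega
    simp [this]
  · intro h
    exact absurd (Finset.self_mem_range_succ n) h

/-- partial column sums. -/
noncomputable def PP (α : ℝ) (a : ℕ → ℝ) (m j : ℕ) : ℝ :=
  ∑ k ∈ Finset.Ico j m, cc α (k - j) * a k

/-- Abel-type transformation. -/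
lemma abel_sum {α : ℝ} (hα : ∀ m : ℤ, α ≠ (m : ℝ)) (a x : ℕ → ℝ) (m : ℕ) :
    ∑ k ∈ Finset.range m, a k * x k =
      ∑ j ∈ Finset.range m, PP α a m j * fracDeltaSeq α x j := by
  have e : ∀ k ∈ Finset.range m, a k * x k =
      ∑ j ∈ Finset.range (k + 1), (cc α (k - j) * a k) * fracDeltaSeq α x j := by
    intro k hk
    conv_lhs => rw [← invB hα x k]
    rw [Finset.mul_sum]
    apply Finset.sum_congr rfl
    intro j hj
    ring
  rw [Finset.sum_congr rfl e, sum_swap_tri]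
  apply Finset.sum_congr rfl
  intro j hj
  unfold PP
  rw [Finset.sum_mul]

end BetaAux

namespace BetaAux

lemma series_iff_R {α : ℝ} (hα : ∀ m : ℤ, α ≠ (m : ℝ)) (a : ℕ → ℝ) (k : ℕ) (L : ℝ) :
    SeriesHasSum (fun j => fracDelta (-α) (k + j) k * a (k + j)) L ↔
      Tendsto (fun m => PP α a m k) atTop (nhds L) := by
  have e : (fun m => ∑ j ∈ Finset.range m, fracDelta (-α) (k + j) k * a (k + j)) =
      fun m => PP α a (m + k) k := by
    funext m
    unfold PP
    rw [Finset.sum_Ico_eq_sum_range]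
    have h : m + k - k = m := by omega
    rw [h]
    apply Finset.sum_congr rfl
    intro j _
    rw [fracDelta_neg_eq_cc hα (Nat.le_add_right k j)]
  unfold SeriesHasSum
  rw [e]
  exact tendsto_add_atTop_iff_nat (f := fun m => PP α a m k) k

lemma series_iff_W {α : ℝ} (hα : ∀ m : ℤ, α ≠ (m : ℝ)) (a : ℕ → ℝ) {n k : ℕ} (hkn : k ≤ n)
    (L : ℝ) : SeriesHasSum (fun j => fracDelta (-α) (n + j) k * a (n + j)) L ↔
      Tendsto (fun m => PP α a m k - PP α a n k) atTop (nhds L) := by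
  have e : (fun m => ∑ j ∈ Finset.range m, fracDelta (-α) (n + j) k * a (n + j)) =
      fun m => PP α a (m + n) k - PP α a n k := by
    funext m
    have hsplit : PP α a n k + ∑ i ∈ Finset.Ico n (m + n), cc α (i - k) * a i = PP α a (m + n) k := by
      unfold PP
      exact Finset.sum_Ico_consecutive _ hkn (by omega)
    rw [← hsplit]
    have : ∑ i ∈ Finset.Ico n (m + n), cc α (i - k) * a i =
        ∑ j ∈ Finset.range m, fracDelta (-α) (n + j) k * a (n + j) := by
      rw [Finset.sum_Ico_eq_sum_range]
      have h : m + n - n = m := by omega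
      rw [h]
      apply Finset.sum_congr rfl
      intro j _
      rw [fracDelta_neg_eq_cc hα (by omega)]
    rw [this]
    ring
  unfold SeriesHasSum
  rw [e]
  exact tendsto_add_atTop_iff_nat (f := fun m => PP α a m k - PP α a n k) n

/-- sufficiency core. -/
lemma bwd_core {α : ℝ} (hα : ∀ m : ℤ, α ≠ (m : ℝ)) (a : ℕ → ℝ) (R : ℕ → ℝ)
    (hR : ∀ k, Tendsto (fun m => PP α a m k) atTop (nhds (R k)))
    (hRsum : Summable fun k => |R k|)
    (hW0 : Tendsto (fun n => ∑ k ∈ Finset.range (n + 1), |R k - PP α a n k|) atTop (nhds 0))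
    (x : ℕ → ℝ) (hx : memLinfDelta α x) :
    ∃ L, Tendsto (fun m => ∑ k ∈ Finset.range m, a k * x k) atTop (nhds L) ∧
      Tendsto (fun m => ∑ k ∈ Finset.range m, R k * fracDeltaSeq α x k) atTop (nhds L) := by
  obtain ⟨Cy, hCy⟩ := hx
  set y := fracDeltaSeq α x with hy
  have hsum : Summable (fun k => R k * y k) := by
    apply Summable.of_abs
    apply Summable.of_nonneg_of_le (fun k => abs_nonneg _) (fun k => ?_) (hRsum.mul_right Cy)
    rw [abs_mul]
    exact mul_le_mul_of_nonneg_left (hCy k) (abs_nonneg _)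
  set T := ∑' k, R k * y k with hT
  have hT2 : Tendsto (fun m => ∑ k ∈ Finset.range m, R k * y k) atTop (nhds T) :=
    hsum.hasSum.tendsto_sum_nat
  refine ⟨T, ?_, hT2⟩
  have hE : Tendsto (fun m => ∑ j ∈ Finset.range m, (R j - PP α a m j) * y j) atTop (nhds 0) := by
    apply squeeze_zero_norm (a := fun m => Cy * ∑ k ∈ Finset.range (m + 1), |R k - PP α a m k|)
    · intro m
      rw [Real.norm_eq_abs]
      calc |∑ j ∈ Finset.range m, (R j - PP α a m j) * y j|
          ≤ ∑ j ∈ Finset.range m, |(R j - PP α a m j) * y j| := Finset.abs_sum_le_sum_abs _ _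
        _ ≤ ∑ j ∈ Finset.range m, |R j - PP α a m j| * Cy := by
            apply Finset.sum_le_sum
            intro j _
            rw [abs_mul]
            exact mul_le_mul_of_nonneg_left (hCy j) (abs_nonneg _)
        _ ≤ ∑ j ∈ Finset.range (m + 1), |R j - PP α a m j| * Cy := by
            apply Finset.sum_le_sum_of_subset_of_nonneg
            · exact Finset.range_subset_range.mpr (Nat.le_succ m)
            · intro j _ _
              have h0 : (0:ℝ) ≤ Cy := le_trans (abs_nonneg _) (hCy 0)
              positivity
        _ = Cy * ∑ j ∈ Finset.range (m + 1), |R j - PP α a m j| := by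
            rw [Finset.mul_sum]; apply Finset.sum_congr rfl; intro j _; ring
    · have := hW0.const_mul Cy
      simpa using this
  have e : ∀ m, ∑ k ∈ Finset.range m, a k * x k =
      (∑ k ∈ Finset.range m, R k * y k) - ∑ j ∈ Finset.range m, (R j - PP α a m j) * y j := by
    intro m
    rw [abel_sum hα a x m, ← Finset.sum_sub_distrib]
    apply Finset.sum_congr rfl
    intro j _
    ring
  rw [funext e]
  have := hT2.sub hE
  simpa using this

end BetaAux

namespace BetaAux

lemma mul_sign_eq_abs (x : ℝ) : x * Real.sign x = |x| := by
  rcases lt_trichotomy x 0 with h | h | h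
  · rw [Real.sign_of_neg h, abs_of_neg h]; ring
  · simp [h]
  · rw [Real.sign_of_pos h, abs_of_pos h]; ring

lemma abs_sign_le_one (x : ℝ) : |Real.sign x| ≤ 1 := by
  rcases lt_trichotomy x 0 with h | h | h
  · rw [Real.sign_of_neg h]; norm_num
  · simp [h]
  · rw [Real.sign_of_pos h]; norm_num

lemma tendsto_bdd {f : ℕ → ℝ} {L : ℝ} (h : Tendsto f atTop (nhds L)) :
    ∃ C, ∀ n, |f n| ≤ C := by
  obtain ⟨C, hC⟩ := h.abs.bddAbove_range
  exact ⟨C, fun n => hC (Set.mem_range_self n)⟩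

/-- transformed partial sums converge for every bounded `y`, given β-dual membership. -/
lemma PT_conv {α : ℝ} (hα : ∀ m : ℤ, α ≠ (m : ℝ)) (a : ℕ → ℝ)
    (H : ∀ x : ℕ → ℝ, memLinfDelta α x → ∃ L : ℝ, SeriesHasSum (fun k => a k * x k) L)
    (y : ℕ → ℝ) (C : ℝ) (hy : ∀ n, |y n| ≤ C) :
    ∃ L, Tendsto (fun m => ∑ j ∈ Finset.range m, PP α a m j * y j) atTop (nhds L) := by
  set x : ℕ → ℝ := fun n => ∑ j ∈ Finset.range (n + 1), cc α (n - j) * y j with hxdef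
  have hmem : memLinfDelta α x := ⟨C, fun n => by rw [hxdef, invA hα y n]; exact hy n⟩
  obtain ⟨L, hL⟩ := H x hmem
  refine ⟨L, ?_⟩
  have e : (fun m => ∑ j ∈ Finset.range m, PP α a m j * y j) =
      fun m => ∑ k ∈ Finset.range m, a k * x k := by
    funext m
    rw [abel_sum hα a x m]
    apply Finset.sum_congr rfl
    intro j _
    rw [hxdef, invA hα y j]
  rw [e]
  exact hL

/-- the row functionals on `ℓ∞` realized as bounded continuous functions on `ℕ`. -/
noncomputable def Tm (α : ℝ) (a : ℕ → ℝ) (m : ℕ) : BoundedContinuousFunction ℕ ℝ →L[ℝ] ℝ :=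
  LinearMap.mkContinuous
    { toFun := fun y => ∑ j ∈ Finset.range m, PP α a m j * y j
      map_add' := by
        intro y z
        simp only [BoundedContinuousFunction.coe_add, Pi.add_apply, mul_add]
        rw [Finset.sum_add_distrib]
      map_smul' := by
        intro c y
        simp only [BoundedContinuousFunction.coe_smul, Pi.smul_apply, smul_eq_mul,
          RingHom.id_apply, Finset.mul_sum]
        apply Finset.sum_congr rfl
        intro j _
        ring }
    (∑ j ∈ Finset.range m, |PP α a m j|)
    (by
      intro y
      simp only [LinearMap.coe_mk, AddHom.coe_mk, Real.norm_eq_abs]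
      calc |∑ j ∈ Finset.range m, PP α a m j * y j|
          ≤ ∑ j ∈ Finset.range m, |PP α a m j * y j| := Finset.abs_sum_le_sum_abs _ _
        _ ≤ ∑ j ∈ Finset.range m, |PP α a m j| * ‖y‖ := by
            apply Finset.sum_le_sum
            intro j _
            rw [abs_mul]
            exact mul_le_mul_of_nonneg_left
              (by simpa [Real.norm_eq_abs] using y.norm_coe_le_norm j) (abs_nonneg _)
        _ = (∑ j ∈ Finset.range m, |PP α a m j|) * ‖y‖ := by rw [Finset.sum_mul])

lemma Tm_apply (α : ℝ) (a : ℕ → ℝ) (m : ℕ) (y : BoundedContinuousFunction ℕ ℝ) :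
    Tm α a m y = ∑ j ∈ Finset.range m, PP α a m j * y j := rfl

/-- uniform bound on row `ℓ¹`-norms, via Banach–Steinhaus. -/
lemma row_bound {α : ℝ} (hα : ∀ m : ℤ, α ≠ (m : ℝ)) (a : ℕ → ℝ)
    (H : ∀ x : ℕ → ℝ, memLinfDelta α x → ∃ L : ℝ, SeriesHasSum (fun k => a k * x k) L) :
    ∃ C', 0 ≤ C' ∧ ∀ m, ∑ j ∈ Finset.range m, |PP α a m j| ≤ C' := by
  have hpt : ∀ y : BoundedContinuousFunction ℕ ℝ, ∃ C, ∀ m, ‖Tm α a m y‖ ≤ C := by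
    intro y
    obtain ⟨L, hL⟩ := PT_conv hα a H (fun j => y j) ‖y‖
      (fun n => by simpa [Real.norm_eq_abs] using y.norm_coe_le_norm n)
    obtain ⟨C, hC⟩ := tendsto_bdd hL
    exact ⟨C, fun m => by rw [Tm_apply, Real.norm_eq_abs]; exact hC m⟩
  obtain ⟨C', hC'⟩ := banach_steinhaus hpt
  refine ⟨max C' 0, le_max_right _ _, ?_⟩
  intro m
  set ys : BoundedContinuousFunction ℕ ℝ :=
    BoundedContinuousFunction.ofNormedAddCommGroup (fun j => Real.sign (PP α a m j))
      continuous_of_discreteTopology 1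
      (fun j => by simpa [Real.norm_eq_abs] using abs_sign_le_one (PP α a m j)) with hys
  have hnorm : ‖ys‖ ≤ 1 :=
    BoundedContinuousFunction.norm_ofNormedAddCommGroup_le _ (by norm_num) _
  have happ : Tm α a m ys = ∑ j ∈ Finset.range m, |PP α a m j| := by
    rw [Tm_apply]
    apply Finset.sum_congr rfl
    intro j _
    have : ys j = Real.sign (PP α a m j) := rfl
    rw [this, mul_sign_eq_abs]
  calc ∑ j ∈ Finset.range m, |PP α a m j| = Tm α a m ys := happ.symm
    _ ≤ |Tm α a m ys| := le_abs_self _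
    _ ≤ ‖Tm α a m‖ * ‖ys‖ := by
        rw [← Real.norm_eq_abs]; exact (Tm α a m).le_opNorm ys
    _ ≤ C' * 1 := by
        apply mul_le_mul (hC' m) hnorm (norm_nonneg _) (le_trans (norm_nonneg _) (hC' m))
    _ ≤ max C' 0 := by simp [le_max_left]

/-- existence of the column limits `R k`. -/
lemma step1 {α : ℝ} (hα : ∀ m : ℤ, α ≠ (m : ℝ)) (a : ℕ → ℝ)
    (H : ∀ x : ℕ → ℝ, memLinfDelta α x → ∃ L : ℝ, SeriesHasSum (fun k => a k * x k) L)
    (k : ℕ) : ∃ L, Tendsto (fun m => PP α a m k) atTop (nhds L) := by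
  obtain ⟨L, hL⟩ := PT_conv hα a H (fun j => if j = k then (1:ℝ) else 0) 1
    (fun n => by by_cases h : n = k <;> simp [h])
  refine ⟨L, ?_⟩
  apply hL.congr'
  filter_upwards [eventually_ge_atTop (k + 1)] with m hm
  have : ∀ j ∈ Finset.range m, PP α a m j * (if j = k then (1:ℝ) else 0) =
      if j = k then PP α a m j else 0 := by
    intro j _
    split <;> simp_all
  rw [Finset.sum_congr rfl this, Finset.sum_ite_eq' (Finset.range m) k (fun j => PP α a m j),
    if_pos (Finset.mem_range.mpr (by omega))]

end BetaAux

namespace BetaAux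

lemma schur {α : ℝ} (a : ℕ → ℝ) (R : ℕ → ℝ)
    (hR : ∀ k, Tendsto (fun m => PP α a m k) atTop (nhds (R k)))
    (hRsum : Summable fun k => |R k|)
    (hT : ∀ y : ℕ → ℝ, (∀ n, |y n| ≤ 1) →
      ∃ L, Tendsto (fun m => ∑ j ∈ Finset.range m, PP α a m j * y j) atTop (nhds L)) :
    Tendsto (fun n => ∑ j ∈ Finset.range n, |R j - PP α a n j|) atTop (nhds 0) := by
  set G : ℕ → ℝ := fun n => ∑ j ∈ Finset.range n, |R j - PP α a n j| with hGdef
  by_contra hcon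
  rw [Metric.tendsto_atTop] at hcon
  push_neg at hcon
  obtain ⟨ε, hε, hfreq⟩ := hcon
  have hdist : ∀ n, dist (G n) 0 = G n := by
    intro n
    rw [Real.dist_eq, sub_zero, abs_of_nonneg]
    exact Finset.sum_nonneg fun j _ => abs_nonneg _
  have hcol : ∀ N : ℕ,
      Tendsto (fun n => ∑ j ∈ Finset.range N, |R j - PP α a n j|) atTop (nhds 0) := by
    intro N
    have hj : ∀ j : ℕ, Tendsto (fun n => |R j - PP α a n j|) atTop (nhds 0) := by
      intro j
      have h1 : Tendsto (fun n => R j - PP α a n j) atTop (nhds (R j - R j)) :=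
        tendsto_const_nhds.sub (hR j)
      rw [sub_self] at h1
      simpa using h1.abs
    have := tendsto_finset_sum (Finset.range N) (fun j (_ : j ∈ Finset.range N) => hj j)
    simpa using this
  have key : ∀ N : ℕ, ∃ n, N + 1 ≤ n ∧ ε ≤ G n ∧
      ∑ j ∈ Finset.range N, |R j - PP α a n j| < ε / 4 := by
    intro N
    have h4 : 0 < ε / 4 := by linarith
    have := hcol N
    rw [Metric.tendsto_atTop] at this
    obtain ⟨N₀, hN₀⟩ := this (ε / 4) h4
    obtain ⟨n, hn1, hn2⟩ := hfreq (max (N + 1) N₀)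
    refine ⟨n, le_trans (le_max_left _ _) hn1, by rwa [hdist n] at hn2, ?_⟩
    have h5 := hN₀ n (le_trans (le_max_right _ _) hn1)
    rw [Real.dist_eq, sub_zero] at h5
    have h6 := le_abs_self (∑ j ∈ Finset.range N, |R j - PP α a n j|)
    linarith
  set f : ℕ → ℕ := fun p => Classical.choose (key p) with hf
  have hfspec : ∀ p, p + 1 ≤ f p ∧ ε ≤ G (f p) ∧
      ∑ j ∈ Finset.range p, |R j - PP α a (f p) j| < ε / 4 :=
    fun p => Classical.choose_spec (key p)
  set ns : ℕ → ℕ := fun i => f^[i] 0 with hns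
  have hns_succ : ∀ i, ns (i + 1) = f (ns i) := fun i => Function.iterate_succ_apply' f i 0
  have hns_mono : StrictMono ns := by
    apply strictMono_nat_of_lt_succ
    intro i
    rw [hns_succ i]
    have := (hfspec (ns i)).1
    omega
  have hex : ∀ j : ℕ, ∃ i, j < ns i :=
    fun j => ⟨j + 1, lt_of_lt_of_le (Nat.lt_succ_self j) hns_mono.le_apply⟩
  set idx : ℕ → ℕ := fun j => Nat.find (hex j) with hidx
  set y : ℕ → ℝ := fun j => (-1 : ℝ) ^ (idx j) * Real.sign (R j - PP α a (ns (idx j)) j) with hy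
  have hy1 : ∀ j, |y j| ≤ 1 := by
    intro j
    rw [hy]
    calc |(-1 : ℝ) ^ (idx j) * Real.sign (R j - PP α a (ns (idx j)) j)|
        = |(-1 : ℝ) ^ (idx j)| * |Real.sign (R j - PP α a (ns (idx j)) j)| := abs_mul _ _
      _ = |Real.sign (R j - PP α a (ns (idx j)) j)| := by
          rw [abs_pow, abs_neg, abs_one, one_pow, one_mul]
      _ ≤ 1 := abs_sign_le_one _
  have hidx_eq : ∀ i j, ns i ≤ j → j < ns (i + 1) → idx j = i + 1 := by
    intro i j h1 h2
    rw [hidx]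
    rw [Nat.find_eq_iff]
    refine ⟨h2, ?_⟩
    intro i' hi'
    push_neg
    calc ns i' ≤ ns i := hns_mono.monotone (by omega)
      _ ≤ j := h1
  obtain ⟨Ly, hLy⟩ := hT y hy1
  have hsum : Summable (fun k => R k * y k) := by
    apply Summable.of_abs
    apply Summable.of_nonneg_of_le (fun k => abs_nonneg _) (fun k => ?_) (hRsum.mul_right 1)
    rw [abs_mul]
    exact mul_le_mul_of_nonneg_left (hy1 k) (abs_nonneg _)
  have hRy : Tendsto (fun n => ∑ j ∈ Finset.range n, R j * y j) atTop
      (nhds (∑' k, R k * y k)) := hsum.hasSum.tendsto_sum_nat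
  set B : ℕ → ℝ := fun n => ∑ j ∈ Finset.range n, (R j - PP α a n j) * y j with hBdef
  have hBeq : ∀ n, B n =
      (∑ j ∈ Finset.range n, R j * y j) - ∑ j ∈ Finset.range n, PP α a n j * y j := by
    intro n
    rw [hBdef, ← Finset.sum_sub_distrib]
    apply Finset.sum_congr rfl
    intro j _
    ring
  have hB : Tendsto B atTop (nhds ((∑' k, R k * y k) - Ly)) :=
    (hRy.sub hLy).congr fun n => (hBeq n).symm
  -- block decomposition
  set s : ℕ → ℝ := fun i => ∑ j ∈ Finset.Ico (ns i) (ns (i + 1)), |R j - PP α a (ns (i + 1)) j|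
    with hs
  set HH : ℕ → ℝ := fun i => ∑ j ∈ Finset.range (ns i), (R j - PP α a (ns (i + 1)) j) * y j
    with hHH
  have hsplit : ∀ (i : ℕ) (F : ℕ → ℝ),
      ∑ j ∈ Finset.range (ns (i + 1)), F j =
        (∑ j ∈ Finset.range (ns i), F j) + ∑ j ∈ Finset.Ico (ns i) (ns (i + 1)), F j := by
    intro i F
    rw [Finset.range_eq_Ico, Finset.range_eq_Ico]
    exact (Finset.sum_Ico_consecutive F (Nat.zero_le (ns i))
      (le_of_lt (hns_mono (Nat.lt_succ_self i)))).symm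
  have hdecomp : ∀ i, B (ns (i + 1)) = HH i + (-1 : ℝ) ^ (i + 1) * s i := by
    intro i
    have hblock : ∑ j ∈ Finset.Ico (ns i) (ns (i + 1)), (R j - PP α a (ns (i + 1)) j) * y j
        = (-1 : ℝ) ^ (i + 1) * s i := by
      simp only [hs, Finset.mul_sum]
      apply Finset.sum_congr rfl
      intro j hj
      obtain ⟨h1, h2⟩ := Finset.mem_Ico.mp hj
      have hij : idx j = i + 1 := hidx_eq i j h1 h2
      simp only [hy, hij]
      calc (R j - PP α a (ns (i + 1)) j) *
            ((-1 : ℝ) ^ (i + 1) * Real.sign (R j - PP α a (ns (i + 1)) j))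
          = (-1 : ℝ) ^ (i + 1) *
            ((R j - PP α a (ns (i + 1)) j) * Real.sign (R j - PP α a (ns (i + 1)) j)) := by ring
        _ = (-1 : ℝ) ^ (i + 1) * |R j - PP α a (ns (i + 1)) j| := by rw [mul_sign_eq_abs]
    show ∑ j ∈ Finset.range (ns (i + 1)), (R j - PP α a (ns (i + 1)) j) * y j = _
    rw [hsplit i (fun j => (R j - PP α a (ns (i + 1)) j) * y j), hblock]
  have hHbound : ∀ i, |HH i| < ε / 4 := by
    intro i
    have h1 : |HH i| ≤ ∑ j ∈ Finset.range (ns i), |R j - PP α a (ns (i + 1)) j| := by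
      rw [hHH]
      calc |∑ j ∈ Finset.range (ns i), (R j - PP α a (ns (i + 1)) j) * y j|
          ≤ ∑ j ∈ Finset.range (ns i), |(R j - PP α a (ns (i + 1)) j) * y j| :=
            Finset.abs_sum_le_sum_abs _ _
        _ ≤ ∑ j ∈ Finset.range (ns i), |R j - PP α a (ns (i + 1)) j| := by
            apply Finset.sum_le_sum
            intro j _
            rw [abs_mul]
            calc |R j - PP α a (ns (i + 1)) j| * |y j|
                ≤ |R j - PP α a (ns (i + 1)) j| * 1 :=
                  mul_le_mul_of_nonneg_left (hy1 j) (abs_nonneg _)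
              _ = |R j - PP α a (ns (i + 1)) j| := mul_one _
    have h2 := (hfspec (ns i)).2.2
    rw [← hns_succ i] at h2
    linarith
  have hslb : ∀ i, 3 * ε / 4 ≤ s i := by
    intro i
    have h1 : G (ns (i + 1)) =
        (∑ j ∈ Finset.range (ns i), |R j - PP α a (ns (i + 1)) j|) + s i := by
      rw [hGdef]
      exact hsplit i (fun j => |R j - PP α a (ns (i + 1)) j|)
    have h2 := (hfspec (ns i)).2.1
    rw [← hns_succ i] at h2
    have h3 := (hfspec (ns i)).2.2
    rw [← hns_succ i] at h3
    linarith
  set D : ℕ → ℝ := fun i => B (ns (i + 2)) - B (ns (i + 1)) with hD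
  have habs : ∀ i, ε ≤ |D i| := by
    intro i
    have e : D i = (HH (i + 1) - HH i) + (-1 : ℝ) ^ i * (s (i + 1) + s i) := by
      show B (ns (i + 2)) - B (ns (i + 1)) = _
      rw [show i + 2 = i + 1 + 1 from rfl, hdecomp (i + 1), hdecomp i]
      ring
    have h1 : |(-1 : ℝ) ^ i * (s (i + 1) + s i)| = s (i + 1) + s i := by
      rw [abs_mul, abs_pow, abs_neg, abs_one, one_pow, one_mul, abs_of_nonneg]
      have := hslb i
      have := hslb (i + 1)
      linarith
    have h4 : |D i + -(HH (i + 1) - HH i)| ≤ |D i| + |-(HH (i + 1) - HH i)| := abs_add_le _ _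
    rw [abs_neg] at h4
    have h5 : D i + -(HH (i + 1) - HH i) = (-1 : ℝ) ^ i * (s (i + 1) + s i) := by
      rw [e]; ring
    rw [h5, h1] at h4
    have h6 : |HH (i + 1) - HH i| ≤ |HH (i + 1)| + |HH i| := by
      have h7 := abs_add_le (HH (i + 1)) (-(HH i))
      rw [abs_neg] at h7
      simpa [sub_eq_add_neg] using h7
    have hHi := hHbound i
    have hHi1 := hHbound (i + 1)
    have hsi := hslb i
    have hsi1 := hslb (i + 1)
    linarith
  have hg : Tendsto (fun i => B (ns i)) atTop (nhds ((∑' k, R k * y k) - Ly)) :=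
    hB.comp hns_mono.tendsto_atTop
  have hg1 : Tendsto (fun i => B (ns (i + 1))) atTop (nhds ((∑' k, R k * y k) - Ly)) :=
    hg.comp (tendsto_add_atTop_nat 1)
  have hg2 : Tendsto (fun i => B (ns (i + 2))) atTop (nhds ((∑' k, R k * y k) - Ly)) :=
    hg.comp (tendsto_add_atTop_nat 2)
  have hD0 : Tendsto D atTop (nhds 0) := by
    have := hg2.sub hg1
    rw [sub_self] at this
    exact this
  rw [Metric.tendsto_atTop] at hD0
  obtain ⟨N, hN⟩ := hD0 ε hε
  have h8 := hN N le_rfl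
  rw [Real.dist_eq, sub_zero] at h8
  linarith [habs N]

end BetaAux


open BetaAux

/-- Characterization of the β-dual of `ℓ∞(Δ^(α))`:
`a ∈ (ℓ∞(Δ^(α)))^β` iff the series `R_k a` converge with `∑_k |R_k a| < ∞` and
`lim_n ∑_{k=0}^n |w_{nk}| = 0`; moreover, in this case
`∑_k a_k x_k = ∑_k (R_k a)(Δ^(α)x)_k` for every `x ∈ ℓ∞(Δ^(α))`. -/
theorem betaDual_linfDelta (α : ℝ) (hα : ∀ m : ℤ, α ≠ (m : ℝ)) (a : ℕ → ℝ) :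
    ((∀ x : ℕ → ℝ, memLinfDelta α x → ∃ L : ℝ, SeriesHasSum (fun k => a k * x k) L) ↔
      (∃ R : ℕ → ℝ,
        (∀ k, SeriesHasSum (fun j => fracDelta (-α) (k + j) k * a (k + j)) (R k)) ∧
        (∃ C : ℝ, ∀ m, ∑ k ∈ Finset.range m, |R k| ≤ C)) ∧
      (∃ W : ℕ → ℕ → ℝ,
        (∀ n k, k ≤ n → SeriesHasSum (fun j => fracDelta (-α) (n + j) k * a (n + j)) (W n k)) ∧
        Tendsto (fun n => ∑ k ∈ Finset.range (n + 1), |W n k|) atTop (nhds 0))) ∧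
    ((∀ x : ℕ → ℝ, memLinfDelta α x → ∃ L : ℝ, SeriesHasSum (fun k => a k * x k) L) →
      ∀ x : ℕ → ℝ, memLinfDelta α x →
        ∀ R : ℕ → ℝ,
          (∀ k, SeriesHasSum (fun j => fracDelta (-α) (k + j) k * a (k + j)) (R k)) →
          ∀ L : ℝ, SeriesHasSum (fun k => a k * x k) L →
            SeriesHasSum (fun k => R k * fracDeltaSeq α x k) L) := by
  have fwd : (∀ x : ℕ → ℝ, memLinfDelta α x → ∃ L : ℝ, SeriesHasSum (fun k => a k * x k) L) →
      ∃ R : ℕ → ℝ, (∀ k, Tendsto (fun m => PP α a m k) atTop (nhds (R k))) ∧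
        (∃ C : ℝ, ∀ m, ∑ k ∈ Finset.range m, |R k| ≤ C) ∧
        Tendsto (fun n => ∑ k ∈ Finset.range (n + 1), |R k - PP α a n k|) atTop (nhds 0) := by
    intro H
    set R : ℕ → ℝ := fun k => Classical.choose (step1 hα a H k) with hRdef
    have hR : ∀ k, Tendsto (fun m => PP α a m k) atTop (nhds (R k)) :=
      fun k => Classical.choose_spec (step1 hα a H k)
    obtain ⟨C', hC0, hC'⟩ := row_bound hα a H
    have hRle : ∀ m, ∑ k ∈ Finset.range m, |R k| ≤ C' := by
      intro m
      have h1 : Tendsto (fun m' => ∑ k ∈ Finset.range m, |PP α a m' k|) atTop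
          (nhds (∑ k ∈ Finset.range m, |R k|)) :=
        tendsto_finset_sum _ (fun k _ => (hR k).abs)
      apply le_of_tendsto h1
      filter_upwards [eventually_ge_atTop m] with m' hm'
      calc ∑ k ∈ Finset.range m, |PP α a m' k|
          ≤ ∑ k ∈ Finset.range m', |PP α a m' k| :=
            Finset.sum_le_sum_of_subset_of_nonneg (Finset.range_subset_range.mpr hm')
              (fun _ _ _ => abs_nonneg _)
        _ ≤ C' := hC' m'
    have hRsum : Summable (fun k => |R k|) :=
      summable_of_sum_range_le (fun k => abs_nonneg _) hRle
    have hsch := schur a R hR hRsum (fun y hy => PT_conv hα a H y 1 hy)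
    have hPnn : ∀ n, PP α a n n = 0 := by
      intro n; unfold PP; rw [Finset.Ico_self, Finset.sum_empty]
    have h0 : Tendsto (fun n => |R n|) atTop (nhds 0) := hRsum.tendsto_atTop_zero
    have e : ∀ n, ∑ k ∈ Finset.range (n + 1), |R k - PP α a n k| =
        (∑ k ∈ Finset.range n, |R k - PP α a n k|) + |R n| := by
      intro n
      rw [Finset.sum_range_succ, hPnn n, sub_zero]
    have hWlim : Tendsto (fun n => ∑ k ∈ Finset.range (n + 1), |R k - PP α a n k|)
        atTop (nhds 0) := by
      have h2 := hsch.add h0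
      rw [add_zero] at h2
      exact h2.congr (fun n => (e n).symm)
    exact ⟨R, hR, ⟨C', hRle⟩, hWlim⟩
  constructor
  · constructor
    · intro H
      obtain ⟨R, hR, hC, hWlim⟩ := fwd H
      refine ⟨⟨R, fun k => (series_iff_R hα a k (R k)).mpr (hR k), hC⟩,
        ⟨fun n k => R k - PP α a n k, ?_, hWlim⟩⟩
      intro n k hkn
      exact (series_iff_W hα a hkn _).mpr ((hR k).sub_const (PP α a n k))
    · rintro ⟨⟨R, hRs, C, hC⟩, ⟨W, hWs, hWlim⟩⟩ x hx
      have hR : ∀ k, Tendsto (fun m => PP α a m k) atTop (nhds (R k)) :=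
        fun k => (series_iff_R hα a k (R k)).mp (hRs k)
      have hRsum : Summable fun k => |R k| :=
        summable_of_sum_range_le (fun _ => abs_nonneg _) hC
      have hWeq : ∀ n k, k ≤ n → W n k = R k - PP α a n k := by
        intro n k hkn
        have h1 := (series_iff_W hα a hkn _).mp (hWs n k hkn)
        have h2 : Tendsto (fun m => PP α a m k - PP α a n k) atTop
            (nhds (R k - PP α a n k)) := (hR k).sub_const _
        exact tendsto_nhds_unique h1 h2
      have hW0 : Tendsto (fun n => ∑ k ∈ Finset.range (n + 1), |R k - PP α a n k|)
          atTop (nhds 0) := by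
        apply hWlim.congr
        intro n
        apply Finset.sum_congr rfl
        intro k hk
        rw [hWeq n k (by simpa [Nat.lt_succ_iff] using Finset.mem_range.mp hk)]
      obtain ⟨L, hL, _⟩ := bwd_core hα a R hR hRsum hW0 x hx
      exact ⟨L, hL⟩
  · intro H x hx R hRs L hL
    obtain ⟨R', hR', hC', hWlim'⟩ := fwd H
    have hR : ∀ k, Tendsto (fun m => PP α a m k) atTop (nhds (R k)) :=
      fun k => (series_iff_R hα a k (R k)).mp (hRs k)
    have hReq : R = R' := funext fun k => tendsto_nhds_unique (hR k) (hR' k)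
    obtain ⟨C, hC⟩ := hC'
    have hRsum : Summable fun k => |R k| := by
      rw [hReq]
      exact summable_of_sum_range_le (fun _ => abs_nonneg _) hC
    have hW0 : Tendsto (fun n => ∑ k ∈ Finset.range (n + 1), |R k - PP α a n k|)
        atTop (nhds 0) := by rw [hReq]; exact hWlim'
    obtain ⟨L', hL', hL2⟩ := bwd_core hα a R hR hRsum hW0 x hx
    have hLL : L = L' := tendsto_nhds_unique hL hL'
    rw [hLL]
    exact hL2
end
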